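/- Let (L, δ) be a Leibniz coalgebra over k and let (X, ρ_X) and (Y, ρ_Y) be right L-comodules. Define ρ_{X⊗Y} : X ⊗ Y → (X ⊗ Y) ⊗ L by ρ_{X⊗Y}(x ⊗ y) = Σ (x_{[0]} ⊗ y) ⊗ x_{[1]} + Σ (x ⊗ y_{[0]}) ⊗ y_{[1]}, where ρ_X(x) = Σ x_{[0]} ⊗ x_{[1]} and ρ_Y(y) = Σ y_{[0]} ⊗ y_{[1]}. Then (X ⊗ Y, ρ_{X⊗Y}) is a right L-comodule, i.e. ρ_{X⊗Y} satisfies the same comodule identity. -/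

import Mathlib

/-!
Write `ρ` for the coaction of `X ⊗ Y`, `Φ = assoc ∘ (ρ ⊗ id) ∘ ρ` for the double coaction and
`σ` for the swap of the two `L` factors, so that the comodule identity reads `Φ - σ Φ = (id ⊗ δ) ρ`.
Expanding `Φ(x ⊗ y)`, the terms in which `ρ` acts twice on the same factor are `Φ_X(x)` with `y`
inserted and `Φ_Y(y)` with `x` inserted, while the two mixed terms are `M` and `σ M` for
`M = (x₀ ⊗ y₀) ⊗ (x₁ ⊗ y₁)`. Since `σ` is an involution, `id - σ` kills `M + σ M`, and since it
commutes with inserting `x` or `y`, the identities for `X` and `Y` give the one for `X ⊗ Y`.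
-/

open TensorProduct

/-- The right comodule condition over a Leibniz coalgebra `(L, δ)`:
`(ρ ⊗ id) ∘ ρ - (id ⊗ τ) ∘ (ρ ⊗ id) ∘ ρ = (id ⊗ δ) ∘ ρ`. -/
def IsLeibnizComodule (k : Type) [Field k] {L X : Type}
    [AddCommGroup L] [Module k L] [AddCommGroup X] [Module k X]
    (δ : L →ₗ[k] L ⊗[k] L) (ρ : X →ₗ[k] X ⊗[k] L) : Prop :=
  (TensorProduct.assoc k X L L).toLinearMap ∘ₗ (TensorProduct.map ρ LinearMap.id) ∘ₗ ρ
    - (TensorProduct.map LinearMap.id (TensorProduct.comm k L L).toLinearMap) ∘ₗ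
        (TensorProduct.assoc k X L L).toLinearMap ∘ₗ
        (TensorProduct.map ρ LinearMap.id) ∘ₗ ρ
  = (TensorProduct.map LinearMap.id δ) ∘ₗ ρ

open LinearMap

theorem LinearMap.lTensor_rTensor_comm {k M N P Q : Type} [CommSemiring k]
    [AddCommMonoid M] [Module k M] [AddCommMonoid N] [Module k N]
    [AddCommMonoid P] [Module k P] [AddCommMonoid Q] [Module k Q]
    (f : M →ₗ[k] P) (g : N →ₗ[k] Q) (e : M ⊗[k] N) :
    lTensor P g (rTensor N f e) = rTensor Q f (lTensor M g e) :=
  LinearMap.congr_fun ((lTensor_comp_rTensor M f g).trans (rTensor_comp_lTensor M f g).symm) e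

namespace LeibnizComodule

variable {k : Type} [CommSemiring k] {L X Y T : Type}
  [AddCommMonoid L] [Module k L] [AddCommMonoid X] [Module k X]
  [AddCommMonoid Y] [Module k Y] [AddCommMonoid T] [Module k T]

variable (k L T) in
def swap : T ⊗[k] (L ⊗[k] L) →ₗ[k] T ⊗[k] (L ⊗[k] L) :=
  lTensor T (TensorProduct.comm k L L).toLinearMap

@[simp]
theorem swap_swap (e : T ⊗[k] (L ⊗[k] L)) : swap k L T (swap k L T e) = e := by
  rw [swap, ← LinearMap.comp_apply, ← lTensor_comp, comm_comp_comm, lTensor_id, id_apply]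

def doubleCoaction (ρ : X →ₗ[k] X ⊗[k] L) : X →ₗ[k] X ⊗[k] (L ⊗[k] L) :=
  (TensorProduct.assoc k X L L).toLinearMap ∘ₗ rTensor L ρ ∘ₗ ρ

theorem isLeibnizComodule_iff {k : Type} [Field k] {L X : Type}
    [AddCommGroup L] [Module k L] [AddCommGroup X] [Module k X]
    {δ : L →ₗ[k] L ⊗[k] L} {ρ : X →ₗ[k] X ⊗[k] L} :
    IsLeibnizComodule k δ ρ ↔
      ∀ x, doubleCoaction ρ x - swap k L X (doubleCoaction ρ x) = lTensor X δ (ρ x) :=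
  LinearMap.ext_iff

def tensorCoaction (ρX : X →ₗ[k] X ⊗[k] L) (ρY : Y →ₗ[k] Y ⊗[k] L) :
    X ⊗[k] Y →ₗ[k] (X ⊗[k] Y) ⊗[k] L :=
  ((TensorProduct.assoc k X Y L).symm.toLinearMap ∘ₗ
      (TensorProduct.map LinearMap.id (TensorProduct.comm k L Y).toLinearMap) ∘ₗ
      (TensorProduct.assoc k X L Y).toLinearMap ∘ₗ
      (TensorProduct.map ρX LinearMap.id))
    + ((TensorProduct.assoc k X Y L).symm.toLinearMap ∘ₗ
        (TensorProduct.map LinearMap.id ρY))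

variable (ρX : X →ₗ[k] X ⊗[k] L) (ρY : Y →ₗ[k] Y ⊗[k] L)

theorem tensorCoaction_tmul (x : X) (y : Y) :
    tensorCoaction ρX ρY (x ⊗ₜ y) =
      rTensor L ((mk k X Y).flip y) (ρX x) + rTensor L (mk k X Y x) (ρY y) := by
  simp only [tensorCoaction, LinearMap.add_apply, coe_comp, Function.comp_apply, map_tmul, id_apply,
    LinearEquiv.coe_coe]
  -- the second summands agree by `rfl`: `assoc.symm (x ⊗ₜ b)` unfolds to `rTensor L (mk x) b`
  congr 1
  induction ρX x using TensorProduct.induction_on with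
  | zero => simp
  | tmul x' l => simp
  | add a b ha hb => simp only [add_tmul, map_add, ha, hb]

theorem assoc_rTensor_tensorCoaction_rTensor_flip_mk (y : Y) (a : X ⊗[k] L) :
    TensorProduct.assoc k (X ⊗[k] Y) L L
        (rTensor L (tensorCoaction ρX ρY) (rTensor L ((mk k X Y).flip y) a)) =
      rTensor (L ⊗[k] L) ((mk k X Y).flip y) (TensorProduct.assoc k X L L (rTensor L ρX a)) +
        swap k L (X ⊗[k] Y) (tensorTensorTensorComm k X L Y L (a ⊗ₜ ρY y)) := by
  induction a using TensorProduct.induction_on with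
  | zero => simp
  | tmul x l =>
    simp only [rTensor_tmul, flip_apply, mk_apply, tensorCoaction_tmul, add_tmul, map_add]
    congr 1
    · induction ρX x using TensorProduct.induction_on with
      | zero => simp
      | tmul x' l' => simp
      | add a b ha hb => simp only [add_tmul, map_add, ha, hb]
    · induction ρY y using TensorProduct.induction_on with
      | zero => simp
      | tmul y' l' => simp [swap]
      | add a b ha hb => simp only [add_tmul, tmul_add, map_add, ha, hb]
  | add a b ha hb => simp only [add_tmul, map_add, ha, hb]; abel

theorem assoc_rTensor_tensorCoaction_rTensor_mk (x : X) (b : Y ⊗[k] L) :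
    TensorProduct.assoc k (X ⊗[k] Y) L L
        (rTensor L (tensorCoaction ρX ρY) (rTensor L (mk k X Y x) b)) =
      rTensor (L ⊗[k] L) (mk k X Y x) (TensorProduct.assoc k Y L L (rTensor L ρY b)) +
        tensorTensorTensorComm k X L Y L (ρX x ⊗ₜ b) := by
  induction b using TensorProduct.induction_on with
  | zero => simp
  | tmul y l =>
    simp only [rTensor_tmul, mk_apply, tensorCoaction_tmul, add_tmul, map_add]
    rw [add_comm]
    congr 1
    · induction ρY y using TensorProduct.induction_on with
      | zero => simp
      | tmul y' l' => simp
      | add a b ha hb => simp only [add_tmul, map_add, ha, hb]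
    · induction ρX x using TensorProduct.induction_on with
      | zero => simp
      | tmul x' l' => simp
      | add a b ha hb => simp only [add_tmul, map_add, ha, hb]
  | add a b ha hb => simp only [tmul_add, map_add, ha, hb]; abel

theorem doubleCoaction_tensorCoaction_tmul (x : X) (y : Y) :
    doubleCoaction (tensorCoaction ρX ρY) (x ⊗ₜ y) =
      rTensor (L ⊗[k] L) ((mk k X Y).flip y) (doubleCoaction ρX x) +
        rTensor (L ⊗[k] L) (mk k X Y x) (doubleCoaction ρY y) +
        (tensorTensorTensorComm k X L Y L (ρX x ⊗ₜ ρY y) +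
          swap k L (X ⊗[k] Y) (tensorTensorTensorComm k X L Y L (ρX x ⊗ₜ ρY y))) := by
  simp only [doubleCoaction, coe_comp, LinearEquiv.coe_coe, Function.comp_apply,
    tensorCoaction_tmul, map_add, assoc_rTensor_tensorCoaction_rTensor_flip_mk,
    assoc_rTensor_tensorCoaction_rTensor_mk]
  abel

theorem isLeibnizComodule_tensorCoaction {k : Type} [Field k] {L X Y : Type}
    [AddCommGroup L] [Module k L] [AddCommGroup X] [Module k X] [AddCommGroup Y] [Module k Y]
    {δ : L →ₗ[k] L ⊗[k] L} {ρX : X →ₗ[k] X ⊗[k] L} {ρY : Y →ₗ[k] Y ⊗[k] L}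
    (hX : IsLeibnizComodule k δ ρX) (hY : IsLeibnizComodule k δ ρY) :
    IsLeibnizComodule k δ (tensorCoaction ρX ρY) := by
  rw [isLeibnizComodule_iff] at hX hY ⊢
  intro z
  induction z using TensorProduct.induction_on with
  | zero => simp
  | add z w hz hw =>
    simp only [map_add]
    rw [← hz, ← hw]
    abel
  | tmul x y =>
    set M := tensorTensorTensorComm k X L Y L (ρX x ⊗ₜ ρY y)
    calc doubleCoaction (tensorCoaction ρX ρY) (x ⊗ₜ y) -
          swap k L _ (doubleCoaction (tensorCoaction ρX ρY) (x ⊗ₜ y))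
        = rTensor (L ⊗[k] L) ((mk k X Y).flip y)
              (doubleCoaction ρX x - swap k L X (doubleCoaction ρX x)) +
            rTensor (L ⊗[k] L) (mk k X Y x)
              (doubleCoaction ρY y - swap k L Y (doubleCoaction ρY y)) +
            ((M + swap k L _ M) - swap k L _ (M + swap k L _ M)) := by
          simp only [doubleCoaction_tensorCoaction_tmul, map_add, map_sub, swap,
            lTensor_rTensor_comm]
          abel
      _ = lTensor (X ⊗[k] Y) δ (tensorCoaction ρX ρY (x ⊗ₜ y)) := by
          rw [hX, hY, map_add (swap k L _), swap_swap, tensorCoaction_tmul, map_add,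
            lTensor_rTensor_comm, lTensor_rTensor_comm]
          abel

end LeibnizComodule

theorem statement_general (k : Type) [Field k]
    (L : Type) [AddCommGroup L] [Module k L]
    (δ : L →ₗ[k] L ⊗[k] L)
    (X : Type) [AddCommGroup X] [Module k X]
    (Y : Type) [AddCommGroup Y] [Module k Y]
    (ρX : X →ₗ[k] X ⊗[k] L) (hX : IsLeibnizComodule k δ ρX)
    (ρY : Y →ₗ[k] Y ⊗[k] L) (hY : IsLeibnizComodule k δ ρY) :
    IsLeibnizComodule k δ
      (((TensorProduct.assoc k X Y L).symm.toLinearMap ∘ₗ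
          (TensorProduct.map LinearMap.id (TensorProduct.comm k L Y).toLinearMap) ∘ₗ
          (TensorProduct.assoc k X L Y).toLinearMap ∘ₗ
          (TensorProduct.map ρX LinearMap.id))
        + ((TensorProduct.assoc k X Y L).symm.toLinearMap ∘ₗ
            (TensorProduct.map LinearMap.id ρY))) :=
  LeibnizComodule.isLeibnizComodule_tensorCoaction hX hY

/-- If `X` and `Y` are right comodules over a Leibniz coalgebra `(L, δ)`, then
`ρ_{X⊗Y}(x ⊗ y) = (x_{[0]} ⊗ y) ⊗ x_{[1]} + (x ⊗ y_{[0]}) ⊗ y_{[1]}` makes `X ⊗ Y`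
a right `L`-comodule. -/
theorem statement (k : Type) [Field k] [CharZero k]
    (L : Type) [AddCommGroup L] [Module k L]
    (δ : L →ₗ[k] L ⊗[k] L)
    (hLeib : IsLeibnizComodule k δ δ)
    (X : Type) [AddCommGroup X] [Module k X]
    (Y : Type) [AddCommGroup Y] [Module k Y]
    (ρX : X →ₗ[k] X ⊗[k] L) (hX : IsLeibnizComodule k δ ρX)
    (ρY : Y →ₗ[k] Y ⊗[k] L) (hY : IsLeibnizComodule k δ ρY) :
    IsLeibnizComodule k δ
      (((TensorProduct.assoc k X Y L).symm.toLinearMap ∘ₗ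
          (TensorProduct.map LinearMap.id (TensorProduct.comm k L Y).toLinearMap) ∘ₗ
          (TensorProduct.assoc k X L Y).toLinearMap ∘ₗ
          (TensorProduct.map ρX LinearMap.id))
        + ((TensorProduct.assoc k X Y L).symm.toLinearMap ∘ₗ
            (TensorProduct.map LinearMap.id ρY))) :=
  statement_general k L δ X Y ρX hX ρY hY
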